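/- Let G be a locally finite graph in which every ball of radius n has at most b(n) vertices, for some function b : ℕ → ℕ. If G has a thick end, then for every k the robber has a winning strategy against k cops in the weak Cops-and-Robber game on G; in particular the weak cop number of G is infinite. -/

import Mathlib

open SimpleGraph Function

universe u

variable {V : Type u}

/-- The ball of radius `n` around `v`: vertices reachable from `v` at geodesic distance at most `n`. -/
def gBall (G : SimpleGraph V) (v : V) (n : ℕ) : Set V :=
  {u | G.Reachable v u ∧ G.dist v u ≤ n}

/-- A ray: a one-sided infinite path, given by an injective map `ℕ → V` with consecutive
vertices adjacent. -/
def IsRay (G : SimpleGraph V) (f : ℕ → V) : Prop :=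
  Function.Injective f ∧ ∀ n, G.Adj (f n) (f (n + 1))

/-- A nonempty finite path given as a list of pairwise distinct vertices with consecutive
vertices adjacent. -/
def IsPathList (G : SimpleGraph V) (l : List V) : Prop :=
  l ≠ [] ∧ l.Chain' G.Adj ∧ l.Nodup

/-- A finite path joining the vertex set `A` to the vertex set `B`. -/
def Joins (G : SimpleGraph V) (A B : Set V) (l : List V) : Prop :=
  IsPathList G l ∧ (∃ a ∈ A, l.head? = some a) ∧ ∃ b ∈ B, l.getLast? = some b

/-- Two rays lie in the same end iff they are joined by infinitely many pairwise
vertex-disjoint paths. -/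
def SameEnd (G : SimpleGraph V) (f g : ℕ → V) : Prop :=
  ∃ F : ℕ → List V,
    (∀ i, Joins G (Set.range f) (Set.range g) (F i)) ∧
    ∀ i j, i ≠ j → ∀ v, v ∈ F i → v ∉ F j

/-- The end represented by the ray `r` is thick: it contains arbitrarily large families of
pairwise vertex-disjoint rays. -/
def ThickEnd (G : SimpleGraph V) (r : ℕ → V) : Prop :=
  ∀ n : ℕ, ∃ F : Fin n → ℕ → V,
    (∀ i, IsRay G (F i)) ∧ (∀ i, SameEnd G (F i) r) ∧
    ∀ i j, i ≠ j → Disjoint (Set.range (F i)) (Set.range (F j))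

/-- A graph is vertex transitive if its automorphism group acts transitively on vertices. -/
def VertexTransitive (G : SimpleGraph V) : Prop :=
  ∀ u v : V, ∃ e : G ≃g G, e u = v

/-- The robber-position history after the robber's move number `t`:
`[r t, r (t-1), ..., r 0]`. -/
def histList (r : ℕ → V) (t : ℕ) : List V :=
  ((List.range (t + 1)).map r).reverse

/-- A cop strategy for `k` cops (a function of the robber-position history) is legal for
speed `s_c` if each cop moves distance at most `s_c` per round. -/
def CopLegal (G : SimpleGraph V) (k s_c : ℕ) (S : List V → Fin k → V) : Prop :=
  ∀ (h : List V) (u : V) (i : Fin k), G.dist (S h i) (S (u :: h) i) ≤ s_c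

/-- A legal robber play against the cop strategy `S`: the robber starts at distance `> ρ`
from every cop, and in each round moves along a path of length at most `s_r` all of whose
vertices stay at distance `> ρ` from every cop. -/
def RobberPlayLegal (G : SimpleGraph V) (k s_r ρ : ℕ) (S : List V → Fin k → V)
    (r : ℕ → V) (w : ℕ → List V) : Prop :=
  (∀ i : Fin k, ρ < G.dist (S [] i) (r 0)) ∧
  ∀ t : ℕ, (w t).Chain' G.Adj ∧ (w t).head? = some (r t) ∧
    (w t).getLast? = some (r (t + 1)) ∧ (w t).length ≤ s_r + 1 ∧
    ∀ u ∈ w t, ∀ i : Fin k, ρ < G.dist (S (histList r t) i) u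

/-- The robber visits the ball `B(R, v)` infinitely often. -/
def RobberVisits (G : SimpleGraph V) (v : V) (R : ℕ) (r : ℕ → V) : Prop :=
  ∀ N : ℕ, ∃ t : ℕ, N ≤ t ∧ r t ∈ gBall G v R

/-- In the weak game, after the cops fix speed `s_c` and capture radius `ρ`, the robber can
choose a speed `s_r`, a base vertex `v` and a radius `R > ρ` and defeat every legal
cop strategy for `k` cops. -/
def RobberBeats (G : SimpleGraph V) (k s_c ρ : ℕ) : Prop :=
  ∃ s_r : ℕ, ∃ v : V, ∃ R : ℕ, ρ < R ∧
    ∀ S : List V → Fin k → V, CopLegal G k s_c S →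
      ∃ r w, RobberPlayLegal G k s_r ρ S r w ∧ RobberVisits G v R r

/-- The robber wins the weak game against `k` cops. -/
def RobberWinsWeak (G : SimpleGraph V) (k : ℕ) : Prop :=
  ∀ s_c ρ : ℕ, RobberBeats G k s_c ρ

/-- `k` cops win the weak game: the cops can choose `s_c` and `ρ` so that for every choice
of `s_r`, `v` and `R > ρ` by the robber there is a legal cop strategy against which no
legal robber play visits `B(R, v)` infinitely often. -/
def CopsWinWeak (G : SimpleGraph V) (k : ℕ) : Prop :=
  ∃ s_c ρ : ℕ, ∀ (s_r : ℕ) (v : V) (R : ℕ), ρ < R →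
    ∃ S : List V → Fin k → V, CopLegal G k s_c S ∧
      ∀ r w, RobberPlayLegal G k s_r ρ S r w → ¬ RobberVisits G v R r

/-!
Take `m > k·b(ρ + s_c)` disjoint rays of the thick end and, using the infinitely many disjoint
paths from each of them to `r`, build `T > k·b(ρ)` pairwise disjoint finite sets ("gadgets"),
each connecting all `m` rays; then cut the rays to pairwise disjoint finite initial segments
("corridors") reaching every gadget. The `k` cop balls of radius `ρ'` contain at most `k·b(ρ')`
vertices, so at every moment some corridor is at distance `> ρ + s_c` and some gadget at
distance `> ρ` from all cops. The robber waits at the start of a corridor; after each cop move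
he runs through a clean gadget to the start of a corridor that is clean with margin `s_c`, hence
still clean after the cops' next move. Finitely many corridors and gadgets bound both his speed
and the region he visits.
-/

namespace SimpleGraph

variable {G : SimpleGraph V}

def ReachableWithin (G : SimpleGraph V) (S : Set V) (x y : V) : Prop :=
  ∃ w : G.Walk x y, ∀ u ∈ w.support, u ∈ S

namespace ReachableWithin

variable {S T : Set V} {x y z : V}

lemma mem_right (h : G.ReachableWithin S x y) : y ∈ S :=
  let ⟨w, hw⟩ := h; hw y w.end_mem_support

lemma mono (h : G.ReachableWithin S x y) (hST : S ⊆ T) : G.ReachableWithin T x y :=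
  let ⟨w, hw⟩ := h; ⟨w, fun u hu => hST (hw u hu)⟩

lemma symm (h : G.ReachableWithin S x y) : G.ReachableWithin S y x :=
  let ⟨w, hw⟩ := h; ⟨w.reverse, fun u hu => hw u (by simpa using hu)⟩

lemma trans (hxy : G.ReachableWithin S x y) (hyz : G.ReachableWithin T y z) :
    G.ReachableWithin (S ∪ T) x z := by
  obtain ⟨w, hw⟩ := hxy
  obtain ⟨w', hw'⟩ := hyz
  refine ⟨w.append w', fun u hu => ?_⟩
  rcases (Walk.mem_support_append_iff _ _).1 hu with hu | hu
  exacts [Or.inl (hw u hu), Or.inr (hw' u hu)]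

end ReachableWithin

lemma Adj.reachableWithin {x y : V} (h : G.Adj x y) : G.ReachableWithin {x, y} x y :=
  ⟨h.toWalk, by simp⟩

lemma reachableWithin_of_isChain {l : List V} {x y : V} (hl : l.IsChain G.Adj)
    (hx : l.head? = some x) (hy : l.getLast? = some y) : G.ReachableWithin {u | u ∈ l} x y := by
  have hne : l ≠ [] := by rintro rfl; simp at hx
  have hx' : l.head hne = x := by simpa [List.head?_eq_some_head hne] using hx
  have hy' : l.getLast hne = y := by simpa [List.getLast?_eq_some_getLast hne] using hy
  exact ⟨(Walk.ofSupport l hne hl).copy hx' hy', by simp⟩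

lemma reachableWithin_image_uIcc {f : ℕ → V} (hf : ∀ n, G.Adj (f n) (f (n + 1))) (a b : ℕ) :
    G.ReachableWithin (f '' Set.uIcc a b) (f a) (f b) := by
  suffices h : ∀ a b, a ≤ b → G.ReachableWithin (f '' Set.Icc a b) (f a) (f b) by
    rcases le_total a b with hab | hba
    · simpa [Set.uIcc_of_le hab] using h a b hab
    · simpa [Set.uIcc_of_ge hba] using (h b a hba).symm
  intro a b hab
  induction b, hab using Nat.le_induction with
  | base => exact ⟨.nil, by simp⟩
  | succ b hab ih =>
    refine (ih.trans (hf b).reachableWithin).mono ?_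
    rintro _ (⟨n, hn, rfl⟩ | rfl | rfl)
    · exact ⟨n, ⟨hn.1, Nat.le_succ_of_le hn.2⟩, rfl⟩
    · exact ⟨b, ⟨hab, by omega⟩, rfl⟩
    · exact ⟨b + 1, ⟨by omega, le_rfl⟩, rfl⟩

end SimpleGraph

open SimpleGraph Function

variable {G : SimpleGraph V}

lemma SameEnd.exists_reachableWithin_disjoint {f g : ℕ → V} (h : SameEnd G f g) {U : Set V}
    (hU : U.Finite) :
    ∃ a b, ∃ K : Set V, K.Finite ∧ Disjoint K U ∧ G.ReachableWithin K (f a) (g b) := by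
  obtain ⟨P, hP, hdisj⟩ := h
  -- a vertex of `U` lies on at most one of the disjoint paths
  have hbad : {n | ∃ u ∈ U, u ∈ P n}.Finite := by
    refine (hU.biUnion fun u _ => Set.Subsingleton.finite (s := {n | u ∈ P n}) ?_).subset ?_
    · exact fun n hn n' hn' => by_contra fun hne => hdisj n n' hne u hn hn'
    · rintro n ⟨u, hu, hun⟩
      exact Set.mem_biUnion hu hun
  obtain ⟨n, hn⟩ := hbad.infinite_compl.nonempty
  obtain ⟨⟨-, hchain, -⟩, ⟨_, ⟨a, rfl⟩, ha⟩, ⟨_, ⟨b, rfl⟩, hb⟩⟩ := hP n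
  exact ⟨a, b, {u | u ∈ P n}, (P n).finite_toSet,
    Set.disjoint_left.2 fun u hu huU => hn ⟨u, huU, hu⟩,
    reachableWithin_of_isChain hchain ha hb⟩

def ConnectsRays (G : SimpleGraph V) {ι : Type*} (F : ι → ℕ → V) (K : Set V) : Prop :=
  ∃ a : ι → ℕ, ∀ i j, G.ReachableWithin K (F i (a i)) (F j (a j))

lemma exists_connectsRays_disjoint {ι : Type*} [Finite ι] {F : ι → ℕ → V} {r : ℕ → V}
    (hF : ∀ i, SameEnd G (F i) r) (hr : IsRay G r) {U : Set V} (hU : U.Finite) :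
    ∃ K : Set V, K.Finite ∧ Disjoint K U ∧ ConnectsRays G F K := by
  obtain ⟨θ, hθ⟩ := (hU.preimage hr.1.injOn).bddAbove
  -- avoiding `r '' Iic θ` as well forces the paths to end on `r` beyond every visit of `r` to `U`
  choose a b K hKfin hKdisj hK using fun i =>
    (hF i).exists_reachableWithin_disjoint (hU.union ((Set.finite_Iic θ).image r))
  have hb : ∀ i, θ < b i := fun i => not_le.1 fun h =>
    Set.disjoint_left.1 (hKdisj i) (hK i).mem_right (Or.inr ⟨b i, h, rfl⟩)
  refine ⟨(⋃ i, K i) ∪ ⋃ i, ⋃ j, r '' Set.uIcc (b i) (b j),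
    (Set.finite_iUnion hKfin).union
      (Set.finite_iUnion fun i => Set.finite_iUnion fun j => Set.finite_uIcc _ _ |>.image r),
    ?_, a, fun i j => ?_⟩
  · refine Set.disjoint_union_left.2 ⟨Set.disjoint_iUnion_left.2 fun i =>
      (hKdisj i).mono_right Set.subset_union_left, ?_⟩
    refine Set.disjoint_iUnion_left.2 fun i => Set.disjoint_iUnion_left.2 fun j =>
      Set.disjoint_left.2 ?_
    rintro _ ⟨y, hy, rfl⟩ hyU
    have := hθ hyU
    have := hb i
    have := hb j
    rw [Set.mem_uIcc] at hy
    omega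
  · refine ((hK i).trans
      ((reachableWithin_image_uIcc hr.2 (b i) (b j)).trans (hK j).symm)).mono ?_
    rintro u (hu | hu | hu)
    · exact Or.inl (Set.mem_iUnion_of_mem i hu)
    · exact Or.inr (Set.mem_iUnion_of_mem i (Set.mem_iUnion_of_mem j hu))
    · exact Or.inl (Set.mem_iUnion_of_mem j hu)

lemma exists_pairwise_disjoint_seq {α : Type*} {p : Set α → Prop}
    (h : ∀ U : Set α, U.Finite → ∃ K, K.Finite ∧ Disjoint K U ∧ p K) :
    ∃ K : ℕ → Set α, Pairwise (Disjoint on K) ∧ ∀ n, p (K n) := by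
  obtain ⟨K, hK, hdisj⟩ :=
    exists_seq_of_forall_finset_exists (fun K => K.Finite ∧ p K) Disjoint fun s hs => by
      obtain ⟨K, hKfin, hKs, hpK⟩ :=
        h (⋃ K ∈ s, K) (s.finite_toSet.biUnion fun K hK => (hs K hK).1)
      exact ⟨K, ⟨hKfin, hpK⟩,
        fun K' hK' => (hKs.mono_right (Set.subset_biUnion_of_mem hK')).symm⟩
  refine ⟨K, fun m n hmn => ?_, fun n => (hK n).2⟩
  rcases hmn.lt_or_gt with hlt | hlt
  exacts [hdisj m n hlt, (hdisj n m hlt).symm]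

lemma exists_corridors {ι κ : Type*} [Finite ι] [Finite κ] {F : ι → ℕ → V}
    (hF : ∀ i n, G.Adj (F i n) (F i (n + 1)))
    (hFdisj : Pairwise (Disjoint on fun i => Set.range (F i)))
    {K : κ → Set V} (hK : ∀ τ, ConnectsRays G F (K τ)) :
    ∃ D : ι → Set V, Pairwise (Disjoint on D) ∧ (∀ i, F i 0 ∈ D i) ∧
      ∀ τ i j, G.ReachableWithin (D i ∪ K τ ∪ D j) (F i 0) (F j 0) := by
  choose a ha using hK
  obtain ⟨A, hA⟩ := (Set.finite_range fun p : κ × ι => a p.1 p.2).bddAbove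
  have hseg : ∀ τ i, G.ReachableWithin (F i '' Set.Iic A) (F i 0) (F i (a τ i)) := by
    refine fun τ i => (reachableWithin_image_uIcc (hF i) 0 (a τ i)).mono (Set.image_mono ?_)
    rw [Set.uIcc_of_le (Nat.zero_le _)]
    exact fun n hn => hn.2.trans (hA ⟨(τ, i), rfl⟩)
  exact ⟨fun i => F i '' Set.Iic A,
    fun i j hij => (hFdisj hij).mono (Set.image_subset_range _ _) (Set.image_subset_range _ _),
    fun i => ⟨0, Nat.zero_le A, rfl⟩,
    fun τ i j => ((hseg τ i).trans (ha τ i j)).trans (hseg τ j).symm⟩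

lemma gBall_finite (hlf : ∀ x : V, (G.neighborSet x).Finite) (x : V) :
    ∀ n, (gBall G x n).Finite
  | 0 => (Set.finite_singleton x).subset fun _ ⟨hxu, hd⟩ =>
      (hxu.dist_eq_zero_iff.1 (Nat.le_zero.1 hd)).symm
  | n + 1 => by
    refine ((gBall_finite hlf x n).biUnion fun y _ => (hlf y).insert y).subset ?_
    rintro u ⟨hxu, hd⟩
    obtain ⟨p, hp⟩ := hxu.symm.exists_walk_length_eq_dist
    cases p with
    | nil => exact Set.mem_biUnion ⟨hxu, by simp⟩ (Set.mem_insert _ _)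
    | @cons _ y _ hadj q =>
      have hq : G.dist x y ≤ n := by
        rw [SimpleGraph.dist_comm]
        have := dist_le q
        rw [SimpleGraph.dist_comm, Walk.length_cons] at hp
        omega
      exact Set.mem_biUnion ⟨q.reverse.reachable, hq⟩ (Set.mem_insert_of_mem y hadj.symm)

lemma exists_far_of_pairwise_disjoint {ι κ : Type*} [Fintype ι] [Fintype κ]
    (hconn : G.Connected) {n B : ℕ} (hfin : ∀ x, (gBall G x n).Finite)
    (hcard : ∀ x, (gBall G x n).ncard ≤ B)
    (c : κ → V) {D : ι → Set V} (hD : Pairwise (Disjoint on D))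
    (h : Fintype.card κ * B < Fintype.card ι) :
    ∃ i, ∀ x ∈ D i, ∀ j, n < G.dist (c j) x := by
  by_contra! hnear
  choose g hgD j hj using hnear
  have hg : Injective g := fun i i' hii' => by_contra fun hne =>
    Set.disjoint_left.1 (hD hne) (hgD i) (hii' ▸ hgD i')
  have hsub : Set.range g ⊆ ⋃ j, gBall G (c j) n := by
    rintro _ ⟨i, rfl⟩
    exact Set.mem_iUnion.2 ⟨j i, hconn _ _, hj i⟩
  have hunion : (⋃ j, gBall G (c j) n).ncard ≤ Fintype.card κ * B :=
    (Set.ncard_iUnion_le_of_fintype _).trans (Finset.sum_le_card_nsmul _ _ _ fun j _ => hcard _)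
  have := Set.ncard_le_ncard hsub (Set.finite_iUnion fun j => hfin (c j))
  rw [Set.ncard_range_of_injective hg, Nat.card_eq_fintype_card] at this
  omega

lemma histList_succ (r : ℕ → V) (t : ℕ) : histList r (t + 1) = r (t + 1) :: histList r t := by
  simp [histList, List.range_succ]

def historyOf (f : List V → V) : ℕ → List V
  | 0 => []
  | t + 1 => f (historyOf f t) :: historyOf f t

lemma histList_historyOf (f : List V → V) (t : ℕ) :
    histList (fun t => f (historyOf f t)) t = historyOf f (t + 1) := by
  induction t with
  | zero => rfl
  | succ t ih => rw [histList_succ, ih]; rfl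

theorem robberBeats_of_corridors {ι κ : Type*} [Fintype ι] [Fintype κ] {k s_c ρ : ℕ}
    (hconn : G.Connected) (hlf : ∀ x : V, (G.neighborSet x).Finite) {b : ℕ → ℕ}
    (hb : ∀ (x : V) (n : ℕ), (gBall G x n).ncard ≤ b n)
    {home : ι → V} {D : ι → Set V} (hD : Pairwise (Disjoint on D))
    (hhome : ∀ i, home i ∈ D i)
    {K : κ → Set V} (hK : Pairwise (Disjoint on K))
    (hroute : ∀ τ i j, G.ReachableWithin (D i ∪ K τ ∪ D j) (home i) (home j))
    (hι : k * b (ρ + s_c) < Fintype.card ι) (hκ : k * b ρ < Fintype.card κ) :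
    RobberBeats G k s_c ρ := by
  obtain ⟨i₀⟩ : Nonempty ι := Fintype.card_pos_iff.1 (by omega)
  choose route hroute using hroute
  let s_r := Finset.univ.sup fun p : κ × ι × ι => (route p.1 p.2.1 p.2.2).length
  let X := Finset.univ.sup fun i => G.dist (home i₀) (home i)
  refine ⟨s_r, home i₀, ρ + 1 + X, by omega, fun S hS => ?_⟩
  choose next hnext using fun c : Fin k → V => exists_far_of_pairwise_disjoint hconn
    (fun x => gBall_finite hlf x _) (fun x => hb x _) c hD (by simpa using hι)
  choose gadget hgadget using fun c : Fin k → V => exists_far_of_pairwise_disjoint hconn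
    (fun x => gBall_finite hlf x _) (fun x => hb x _) c hK (by simpa using hκ)
  let H := historyOf fun h => home (next (S h))
  let pos t := home (next (S (H t)))
  -- the corridor was chosen with margin `s_c`, so it stays clean after the cops' next move
  have hsafe : ∀ t, ∀ x ∈ D (next (S (H t))), ∀ j, ρ < G.dist (S (H (t + 1)) j) x := by
    intro t x hx j
    have hfar := hnext _ x hx j
    have hmove : G.dist (S (H t) j) (S (H (t + 1)) j) ≤ s_c := hS _ _ j
    have := hconn.dist_triangle (u := S (H t) j) (v := S (H (t + 1)) j) (w := x)
    omega
  refine ⟨pos,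
    fun t => (route (gadget (S (H (t + 1)))) (next (S (H t))) (next (S (H (t + 1))))).support,
    ⟨fun j => ?_, fun t => ⟨Walk.isChain_adj_support _, ?_, ?_, ?_, fun u hu j => ?_⟩⟩,
    fun N => ?_⟩
  · have : ρ + s_c < G.dist (S [] j) (pos 0) := hnext (S []) _ (hhome _) j
    omega
  · rw [List.head?_eq_some_head (Walk.support_ne_nil _), Walk.head_support]
  · rw [List.getLast?_eq_some_getLast (Walk.support_ne_nil _), Walk.getLast_support]
  · rw [Walk.length_support]
    exact Nat.succ_le_succ (Finset.le_sup (f := fun p : κ × ι × ι =>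
      (route p.1 p.2.1 p.2.2).length) (Finset.mem_univ (_, _, _)))
  · rw [show histList pos t = H (t + 1) from histList_historyOf (fun h => home (next (S h))) t]
    rcases hroute _ _ _ u hu with (h | h) | h
    · exact hsafe t u h j
    · exact hgadget _ u h j
    · have := hnext _ u h j
      omega
  · have : G.dist (home i₀) (pos N) ≤ X :=
      Finset.le_sup (f := fun i => G.dist (home i₀) (home i)) (Finset.mem_univ _)
    exact ⟨N, le_rfl, hconn _ _, by omega⟩

/-- If every ball of radius `n` of a connected locally finite graph has at most `b n`
vertices and the graph has a thick end, then for every `k` the robber wins the weak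
Cops-and-Robber game against `k` cops; in particular the weak cop number is infinite. -/
theorem stmt7 (G : SimpleGraph V) (hconn : G.Connected)
    (hlf : ∀ x : V, (G.neighborSet x).Finite)
    (b : ℕ → ℕ) (hb : ∀ (x : V) (n : ℕ), (gBall G x n).ncard ≤ b n)
    (r : ℕ → V) (hr : IsRay G r) (hthick : ThickEnd G r) :
    ∀ k : ℕ, RobberWinsWeak G k := by
  intro k s_c ρ
  obtain ⟨F, hF, hFr, hFdisj⟩ := hthick (k * b (ρ + s_c) + 1)
  obtain ⟨K, hKdisj, hK⟩ :=
    exists_pairwise_disjoint_seq fun U hU => exists_connectsRays_disjoint hFr hr hU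
  obtain ⟨D, hDdisj, hD, hroute⟩ := exists_corridors (fun i => (hF i).2)
    (fun i j hij => hFdisj i j hij) (K := fun τ : Fin (k * b ρ + 1) => K τ) fun τ => hK τ
  exact robberBeats_of_corridors hconn hlf hb hDdisj hD
    (hKdisj.comp_of_injective Fin.val_injective) hroute (by simp) (by simp)
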